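/- Let H be a finite set of horizontal segments each crossing the vertical line L_v: x = 0, let V(l) be a finite set of vertical segments each with x-coordinate strictly less than 0, and V(r) a finite set of vertical segments each with x-coordinate strictly greater than 0, with H, V(l), V(r) pairwise disjoint. Let OPT be the minimum cardinality of a subset of H ∪ V(l) ∪ V(r) that hits H (such a subset exists, e.g. H itself). Let y* : H ∪ V(l) ∪ V(r) → [0,1] be a fractional cover of H by H ∪ V(l) ∪ V(r) with cost Σ y* ≤ OPT (e.g., an optimal LP solution). Define H_l = {i ∈ H : Σ_{j ∈ V(l), j ∩ i ≠ ∅} y*(j) ≥ 2/5}, H_r = {i ∈ H : Σ_{j ∈ V(r), j ∩ i ≠ ∅} y*(j) ≥ 2/5}, H_h = {i ∈ H : Σ_{j ∈ H, j ∩ i ≠ ∅} y*(j) ≥ 1/5}. Then there exist minimum-cardinality subsets S₁ ⊆ V(l) hitting H_l, S₂ ⊆ V(r) hitting H_r, and S₃ ⊆ H hitting H_h, and any such choice satisfies |S₁ ∪ S₂ ∪ S₃| ≤ 5·OPT. -/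

import Mathlib

open scoped Classical

/-- `s` is a horizontal segment crossing the vertical line `x = 0`. -/
def IsHorizontalCrossing (s : Set (ℝ × ℝ)) : Prop :=
  ∃ a b y : ℝ, a ≤ 0 ∧ 0 ≤ b ∧ s = Set.Icc a b ×ˢ ({y} : Set ℝ)

/-- `s` is a vertical segment with `x`-coordinate `< 0`. -/
def IsVerticalLeft (s : Set (ℝ × ℝ)) : Prop :=
  ∃ x c d : ℝ, x < 0 ∧ c ≤ d ∧ s = ({x} : Set ℝ) ×ˢ Set.Icc c d

/-- `s` is a vertical segment with `x`-coordinate `> 0`. -/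
def IsVerticalRight (s : Set (ℝ × ℝ)) : Prop :=
  ∃ x c d : ℝ, 0 < x ∧ c ≤ d ∧ s = ({x} : Set ℝ) ×ˢ Set.Icc c d

/-- A family `A` of segments hits a family `D` if every member of `D` is
stabbed by some member of `A`. -/
def Hits (A D : Finset (Set (ℝ × ℝ))) : Prop :=
  ∀ d ∈ D, ∃ a ∈ A, (a ∩ d).Nonempty

/-- `S` is a minimum-cardinality subset of `E` hitting `D`. -/
def IsMinHittingSubset (E D S : Finset (Set (ℝ × ℝ))) : Prop :=
  S ⊆ E ∧ Hits S D ∧ ∀ T ⊆ E, Hits T D → S.card ≤ T.card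

/-!
Each family is rounded by a local-ratio argument. Call a demand segment `i` compressible if any
supply segments stabbing `i` can be traded for `k` of them without losing any stabbed demand.
Repeatedly take such an `i` (for `V(l)` the demand whose left end is rightmost, for `V(r)` the one
whose right end is leftmost, for `H` any): the supply stabbing it carries LP weight at least the
threshold `t`, and replacing it by `k` segments pays for itself, so the hitting set `T` obtained
satisfies `|T| t ≤ k ∑ y*`. For vertical supply `k = 2` (the topmost and the bottommost stabbing
segment), for horizontal supply `k = 1` (all stabbing segments lie on one line). With `t = 2/5`
and `t = 1/5` each of the three parts costs at most five times its share of the LP, and the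
shares add up to at most `OPT`.
-/

section Compression

variable {α β : Type*}

def StabCompressible (R : α → β → Prop) (k : ℕ) (E : Finset α) (D : Finset β) (i : β) :
    Prop :=
  ∀ G ⊆ E, (∀ j ∈ G, R j i) →
    ∃ F ⊆ G, F.card ≤ k ∧ ∀ i' ∈ D, (∃ j ∈ G, R j i') → ∃ f ∈ F, R f i'

theorem StabCompressible.mono {R : α → β → Prop} {k : ℕ} {E E' : Finset α} {D : Finset β}
    {i : β} (h : StabCompressible R k E D i) (hE : E' ⊆ E) : StabCompressible R k E' D i :=
  fun G hG => h G (hG.trans hE)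

theorem exists_stabbing_subset_card_mul_le (R : α → β → Prop) (k : ℕ) {t : ℝ} (ht : 0 < t)
    (z : α → ℝ) (E : Finset α) (D : Finset β) (hz : ∀ j ∈ E, 0 ≤ z j)
    (hcov : ∀ i ∈ D, t ≤ ∑ j ∈ E.filter (fun j => R j i), z j)
    (hsel : ∀ D' ⊆ D, D'.Nonempty → ∃ i ∈ D', StabCompressible R k E D' i) :
    ∃ T ⊆ E, (∀ i ∈ D, ∃ j ∈ T, R j i) ∧ T.card * t ≤ k * ∑ j ∈ E, z j := by
  induction E using Finset.strongInduction generalizing D with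
  | H E ih =>
    rcases D.eq_empty_or_nonempty with rfl | hD
    · exact ⟨∅, Finset.empty_subset _, by simp,
        by simpa using mul_nonneg k.cast_nonneg (Finset.sum_nonneg hz)⟩
    obtain ⟨i, hi, hcomp⟩ := hsel D Finset.Subset.rfl hD
    set G := E.filter (fun j => R j i)
    obtain ⟨F, hFG, hFk, hFcov⟩ :=
      hcomp G (Finset.filter_subset _ _) fun j hj => (Finset.mem_filter.1 hj).2
    have hGt : t ≤ ∑ j ∈ G, z j := hcov i hi
    obtain ⟨j₀, hj₀⟩ : G.Nonempty := by
      by_contra hG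
      rw [Finset.not_nonempty_iff_eq_empty.1 hG, Finset.sum_empty] at hGt
      linarith
    set E' := E.filter (fun j => ¬ R j i)
    have hE'E : E' ⊂ E := Finset.filter_ssubset.2 ⟨j₀, (Finset.mem_filter.1 hj₀).1,
      not_not.2 (Finset.mem_filter.1 hj₀).2⟩
    set D' := D.filter (fun i' => ¬ ∃ f ∈ F, R f i')
    -- A supply segment stabbing both `i` and a demand of `D'` would put that demand under `F`.
    have hcov' : ∀ i' ∈ D', t ≤ ∑ j ∈ E'.filter (fun j => R j i'), z j := by
      intro i' hi'
      obtain ⟨hi'D, hi'F⟩ := Finset.mem_filter.1 hi'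
      convert hcov i' hi'D using 2
      rw [Finset.filter_filter]
      exact Finset.filter_congr fun j hj => ⟨And.right, fun hji' => ⟨fun hji =>
        hi'F (hFcov i' hi'D ⟨j, Finset.mem_filter.2 ⟨hj, hji⟩, hji'⟩), hji'⟩⟩
    obtain ⟨T, hTE', hT, hTt⟩ := ih E' hE'E D'
      (fun j hj => hz j (Finset.filter_subset _ _ hj)) hcov'
      (fun D'' hD'' hne => (hsel D'' (hD''.trans (Finset.filter_subset _ _)) hne).imp
        fun _ ⟨hi, h⟩ => ⟨hi, h.mono (Finset.filter_subset _ _)⟩)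
    refine ⟨F ∪ T, Finset.union_subset (hFG.trans (Finset.filter_subset _ _))
      (hTE'.trans (Finset.filter_subset _ _)), fun i' hi' => ?_, ?_⟩
    · by_cases hi'F : ∃ f ∈ F, R f i'
      · exact hi'F.imp fun f ⟨hf, h⟩ => ⟨Finset.mem_union_left _ hf, h⟩
      · exact (hT i' (Finset.mem_filter.2 ⟨hi', hi'F⟩)).imp
          fun f ⟨hf, h⟩ => ⟨Finset.mem_union_right _ hf, h⟩
    · have hsplit : ∑ j ∈ G, z j + ∑ j ∈ E', z j = ∑ j ∈ E, z j :=
        Finset.sum_filter_add_sum_filter_not E _ z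
      have hcard : ((F ∪ T).card : ℝ) ≤ F.card + T.card := by exact_mod_cast F.card_union_le T
      have hFk' : (F.card : ℝ) ≤ k := by exact_mod_cast hFk
      rw [← hsplit, mul_add]
      nlinarith [mul_le_mul_of_nonneg_left hGt k.cast_nonneg]

end Compression

theorem exists_subset_card_le_two_cover_Icc {ι γ : Type*} [LinearOrder γ] (G : Finset ι)
    (lo hi : ι → γ) (y : γ) (hy : ∀ j ∈ G, y ∈ Set.Icc (lo j) (hi j)) :
    ∃ F ⊆ G, F.card ≤ 2 ∧
      ∀ j ∈ G, ∀ y' ∈ Set.Icc (lo j) (hi j), ∃ f ∈ F, y' ∈ Set.Icc (lo f) (hi f) := by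
  rcases G.eq_empty_or_nonempty with rfl | hG
  · exact ⟨∅, Finset.Subset.rfl, by simp, by simp⟩
  obtain ⟨jt, hjt, hjt_max⟩ := G.exists_max_image hi hG
  obtain ⟨jb, hjb, hjb_min⟩ := G.exists_min_image lo hG
  refine ⟨{jt, jb}, Finset.insert_subset hjt (Finset.singleton_subset_iff.2 hjb),
    Finset.card_le_two, fun j hj y' hy' => ?_⟩
  rcases le_total y y' with hyy' | hy'y
  · exact ⟨jt, by simp, (hy jt hjt).1.trans hyy', hy'.2.trans (hjt_max j hj)⟩
  · exact ⟨jb, by simp, (hjb_min j hj).trans hy'.1, hy'y.trans (hy jb hjb).2⟩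

noncomputable def xmin (s : Set (ℝ × ℝ)) : ℝ := sInf (Prod.fst '' s)
noncomputable def xmax (s : Set (ℝ × ℝ)) : ℝ := sSup (Prod.fst '' s)
noncomputable def ymin (s : Set (ℝ × ℝ)) : ℝ := sInf (Prod.snd '' s)
noncomputable def ymax (s : Set (ℝ × ℝ)) : ℝ := sSup (Prod.snd '' s)

theorem IsHorizontalCrossing.eq_Icc_prod {s : Set (ℝ × ℝ)} (h : IsHorizontalCrossing s) :
    xmin s ≤ 0 ∧ 0 ≤ xmax s ∧ s = Set.Icc (xmin s) (xmax s) ×ˢ {ymin s} := by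
  obtain ⟨a, b, y, ha, hb, rfl⟩ := h
  have hab : a ≤ b := ha.trans hb
  rw [xmin, xmax, ymin, Set.fst_image_prod _ (Set.singleton_nonempty y),
    Set.snd_image_prod (Set.nonempty_Icc.2 hab), csInf_Icc hab, csSup_Icc hab, csInf_singleton]
  exact ⟨ha, hb, rfl⟩

theorem eq_singleton_prod_Icc {s : Set (ℝ × ℝ)} {x c d : ℝ} (hcd : c ≤ d)
    (hs : s = {x} ×ˢ Set.Icc c d) :
    xmin s = x ∧ s = {xmin s} ×ˢ Set.Icc (ymin s) (ymax s) := by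
  subst hs
  rw [xmin, ymin, ymax, Set.fst_image_prod _ (Set.nonempty_Icc.2 hcd),
    Set.snd_image_prod (Set.singleton_nonempty x), csInf_singleton, csInf_Icc hcd,
    csSup_Icc hcd]
  exact ⟨rfl, rfl⟩

theorem singleton_prod_Icc_inter_Icc_prod_nonempty_iff {x c d a b y : ℝ} :
    (({x} ×ˢ Set.Icc c d) ∩ (Set.Icc a b ×ˢ {y})).Nonempty ↔
      x ∈ Set.Icc a b ∧ y ∈ Set.Icc c d := by
  rw [Set.prod_inter_prod, Set.prod_nonempty_iff, Set.singleton_inter_nonempty,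
    Set.inter_singleton_nonempty]

theorem IsVerticalLeft.inter_nonempty_iff {v h : Set (ℝ × ℝ)} (hv : IsVerticalLeft v)
    (hh : IsHorizontalCrossing h) :
    (v ∩ h).Nonempty ↔ xmin h ≤ xmin v ∧ ymin h ∈ Set.Icc (ymin v) (ymax v) := by
  obtain ⟨x, c, d, hx, hcd, hv⟩ := hv
  obtain ⟨hvx, hv⟩ := eq_singleton_prod_Icc hcd hv
  obtain ⟨-, hh0, hh⟩ := hh.eq_Icc_prod
  rw [hv, hh, singleton_prod_Icc_inter_Icc_prod_nonempty_iff, ← hv, ← hh, hvx]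
  exact and_congr_left fun _ => and_iff_left (by linarith)

theorem IsVerticalRight.inter_nonempty_iff {v h : Set (ℝ × ℝ)} (hv : IsVerticalRight v)
    (hh : IsHorizontalCrossing h) :
    (v ∩ h).Nonempty ↔ xmin v ≤ xmax h ∧ ymin h ∈ Set.Icc (ymin v) (ymax v) := by
  obtain ⟨x, c, d, hx, hcd, hv⟩ := hv
  obtain ⟨hvx, hv⟩ := eq_singleton_prod_Icc hcd hv
  obtain ⟨hh0, -, hh⟩ := hh.eq_Icc_prod
  rw [hv, hh, singleton_prod_Icc_inter_Icc_prod_nonempty_iff, ← hv, ← hh, hvx]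
  exact and_congr_left fun _ => and_iff_right (by linarith)

theorem IsHorizontalCrossing.inter_nonempty_iff {h h' : Set (ℝ × ℝ)}
    (hh : IsHorizontalCrossing h) (hh' : IsHorizontalCrossing h') :
    (h ∩ h').Nonempty ↔ ymin h = ymin h' := by
  obtain ⟨ha, hb, hh⟩ := hh.eq_Icc_prod
  obtain ⟨ha', hb', hh'⟩ := hh'.eq_Icc_prod
  rw [hh, hh', Set.prod_inter_prod, Set.prod_nonempty_iff, ← hh, ← hh',
    Set.singleton_inter_nonempty, Set.mem_singleton_iff]
  exact and_iff_right ⟨0, ⟨ha, hb⟩, ha', hb'⟩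

section Selection

variable {D E : Finset (Set (ℝ × ℝ))}

theorem exists_stabCompressible_verticalLeft (hD : ∀ h ∈ D, IsHorizontalCrossing h)
    (hE : ∀ v ∈ E, IsVerticalLeft v) (hne : D.Nonempty) :
    ∃ i ∈ D, StabCompressible (fun v h => (v ∩ h).Nonempty) 2 E D i := by
  obtain ⟨i, hi, hi_max⟩ := D.exists_max_image xmin hne
  have hstab := fun {v h} (hv : v ∈ E) (hh : h ∈ D) => (hE v hv).inter_nonempty_iff (hD h hh)
  refine ⟨i, hi, fun G hGE hGi => ?_⟩
  obtain ⟨F, hFG, hFk, hF⟩ := exists_subset_card_le_two_cover_Icc G ymin ymax (ymin i)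
    fun j hj => ((hstab (hGE hj) hi).1 (hGi j hj)).2
  refine ⟨F, hFG, hFk, fun i' hi' ⟨j, hj, hji'⟩ => ?_⟩
  obtain ⟨f, hf, hfi'⟩ := hF j hj _ ((hstab (hGE hj) hi').1 hji').2
  -- `i` reaches least far to the left, so whatever reaches `i` is within reach of `i'`.
  have hfi := (hstab (hGE (hFG hf)) hi).1 (hGi f (hFG hf))
  exact ⟨f, hf, (hstab (hGE (hFG hf)) hi').2 ⟨(hi_max i' hi').trans hfi.1, hfi'⟩⟩

theorem exists_stabCompressible_verticalRight (hD : ∀ h ∈ D, IsHorizontalCrossing h)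
    (hE : ∀ v ∈ E, IsVerticalRight v) (hne : D.Nonempty) :
    ∃ i ∈ D, StabCompressible (fun v h => (v ∩ h).Nonempty) 2 E D i := by
  obtain ⟨i, hi, hi_min⟩ := D.exists_min_image xmax hne
  have hstab := fun {v h} (hv : v ∈ E) (hh : h ∈ D) => (hE v hv).inter_nonempty_iff (hD h hh)
  refine ⟨i, hi, fun G hGE hGi => ?_⟩
  obtain ⟨F, hFG, hFk, hF⟩ := exists_subset_card_le_two_cover_Icc G ymin ymax (ymin i)
    fun j hj => ((hstab (hGE hj) hi).1 (hGi j hj)).2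
  refine ⟨F, hFG, hFk, fun i' hi' ⟨j, hj, hji'⟩ => ?_⟩
  obtain ⟨f, hf, hfi'⟩ := hF j hj _ ((hstab (hGE hj) hi').1 hji').2
  have hfi := (hstab (hGE (hFG hf)) hi).1 (hGi f (hFG hf))
  exact ⟨f, hf, (hstab (hGE (hFG hf)) hi').2 ⟨hfi.1.trans (hi_min i' hi'), hfi'⟩⟩

theorem exists_stabCompressible_horizontal (hD : ∀ h ∈ D, IsHorizontalCrossing h)
    (hE : ∀ h ∈ E, IsHorizontalCrossing h) (hne : D.Nonempty) :
    ∃ i ∈ D, StabCompressible (fun h h' => (h ∩ h').Nonempty) 1 E D i := by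
  obtain ⟨i, hi⟩ := hne
  refine ⟨i, hi, fun G hGE hGi => ?_⟩
  rcases G.eq_empty_or_nonempty with rfl | ⟨j₀, hj₀⟩
  · exact ⟨∅, Finset.Subset.rfl, by simp, by simp⟩
  have hstab := fun {h h'} (hh : h ∈ G) (hh' : h' ∈ D) =>
    (hE h (hGE hh)).inter_nonempty_iff (hD h' hh')
  refine ⟨{j₀}, Finset.singleton_subset_iff.2 hj₀, by simp, fun i' hi' ⟨j, hj, hji'⟩ =>
    ⟨j₀, Finset.mem_singleton_self _, (hstab hj₀ hi').2 ?_⟩⟩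
  rw [(hstab hj₀ hi).1 (hGi j₀ hj₀), ← (hstab hj hi).1 (hGi j hj), (hstab hj hi').1 hji']

end Selection

theorem exists_isMinHittingSubset {E D T : Finset (Set (ℝ × ℝ))} (hTE : T ⊆ E)
    (hT : Hits T D) : ∃ S, IsMinHittingSubset E D S := by
  obtain ⟨S, hS, hS_min⟩ := (E.powerset.filter (fun S => Hits S D)).exists_min_image
    Finset.card ⟨T, Finset.mem_filter.2 ⟨Finset.mem_powerset.2 hTE, hT⟩⟩
  obtain ⟨hSE, hSD⟩ := Finset.mem_filter.1 hS
  exact ⟨S, Finset.mem_powerset.1 hSE, hSD, fun T hTE hT =>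
    hS_min T (Finset.mem_filter.2 ⟨Finset.mem_powerset.2 hTE, hT⟩)⟩

theorem exists_isMinHittingSubset_card_mul_le {E D : Finset (Set (ℝ × ℝ))} {k : ℕ} {t : ℝ}
    (ht : 0 < t) (z : Set (ℝ × ℝ) → ℝ) (hz : ∀ j ∈ E, 0 ≤ z j)
    (hD : ∀ i ∈ D, t ≤ ∑ j ∈ E.filter (fun j => (j ∩ i).Nonempty), z j)
    (hsel : ∀ D' ⊆ D, D'.Nonempty →
      ∃ i ∈ D', StabCompressible (fun j i => (j ∩ i).Nonempty) k E D' i) :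
    (∃ S, IsMinHittingSubset E D S) ∧
      ∀ S, IsMinHittingSubset E D S → (S.card : ℝ) * t ≤ k * ∑ j ∈ E, z j := by
  obtain ⟨T, hTE, hT, hTt⟩ := exists_stabbing_subset_card_mul_le _ k ht z E D hz hD hsel
  refine ⟨exists_isMinHittingSubset hTE hT, fun S hS => le_trans ?_ hTt⟩
  exact mul_le_mul_of_nonneg_right (by exact_mod_cast hS.2.2 T hTE hT) ht.le

theorem stmt6_general (H Vl Vr : Finset (Set (ℝ × ℝ)))
    (hH : ∀ h ∈ H, IsHorizontalCrossing h)
    (hVl : ∀ v ∈ Vl, IsVerticalLeft v)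
    (hVr : ∀ v ∈ Vr, IsVerticalRight v)
    (hd1 : Disjoint H Vl) (hd2 : Disjoint H Vr) (hd3 : Disjoint Vl Vr)
    (OPT : ℕ)
    (ystar : Set (ℝ × ℝ) → ℝ)
    (hy01 : ∀ j ∈ H ∪ Vl ∪ Vr, ystar j ∈ Set.Icc (0 : ℝ) 1)
    (hcost : ∑ j ∈ H ∪ Vl ∪ Vr, ystar j ≤ (OPT : ℝ))
    (Hl Hr Hh : Finset (Set (ℝ × ℝ)))
    (hHl : Hl = H.filter
      (fun i => (2 : ℝ) / 5 ≤ ∑ j ∈ Vl.filter (fun j => (j ∩ i).Nonempty), ystar j))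
    (hHr : Hr = H.filter
      (fun i => (2 : ℝ) / 5 ≤ ∑ j ∈ Vr.filter (fun j => (j ∩ i).Nonempty), ystar j))
    (hHh : Hh = H.filter
      (fun i => (1 : ℝ) / 5 ≤ ∑ j ∈ H.filter (fun j => (j ∩ i).Nonempty), ystar j)) :
    (∃ S₁, IsMinHittingSubset Vl Hl S₁) ∧
    (∃ S₂, IsMinHittingSubset Vr Hr S₂) ∧
    (∃ S₃, IsMinHittingSubset H Hh S₃) ∧
    ∀ S₁ S₂ S₃ : Finset (Set (ℝ × ℝ)),
      IsMinHittingSubset Vl Hl S₁ → IsMinHittingSubset Vr Hr S₂ →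
      IsMinHittingSubset H Hh S₃ →
      ((S₁ ∪ S₂ ∪ S₃).card : ℝ) ≤ 5 * (OPT : ℝ) := by
  have hz : ∀ j ∈ H ∪ Vl ∪ Vr, 0 ≤ ystar j := fun j hj => (hy01 j hj).1
  have hHD : ∀ D ⊆ H, ∀ h ∈ D, IsHorizontalCrossing h := fun D hD h hh => hH h (hD hh)
  have hHlH : Hl ⊆ H := hHl ▸ Finset.filter_subset _ _
  have hHrH : Hr ⊆ H := hHr ▸ Finset.filter_subset _ _
  have hHhH : Hh ⊆ H := hHh ▸ Finset.filter_subset _ _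
  obtain ⟨hex₁, hS₁⟩ := exists_isMinHittingSubset_card_mul_le
    (D := Hl) (k := 2) (t := 2 / 5)
    (by norm_num) ystar (fun j hj => hz j (by simp [hj]))
    (fun i hi => by rw [hHl] at hi; exact (Finset.mem_filter.1 hi).2)
    fun D hD => exists_stabCompressible_verticalLeft (hHD D (hD.trans hHlH)) hVl
  obtain ⟨hex₂, hS₂⟩ := exists_isMinHittingSubset_card_mul_le
    (D := Hr) (k := 2) (t := 2 / 5)
    (by norm_num) ystar (fun j hj => hz j (by simp [hj]))
    (fun i hi => by rw [hHr] at hi; exact (Finset.mem_filter.1 hi).2)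
    fun D hD => exists_stabCompressible_verticalRight (hHD D (hD.trans hHrH)) hVr
  obtain ⟨hex₃, hS₃⟩ := exists_isMinHittingSubset_card_mul_le
    (D := Hh) (k := 1) (t := 1 / 5)
    (by norm_num) ystar (fun j hj => hz j (by simp [hj]))
    (fun i hi => by rw [hHh] at hi; exact (Finset.mem_filter.1 hi).2)
    fun D hD => exists_stabCompressible_horizontal (hHD D (hD.trans hHhH)) hH
  refine ⟨hex₁, hex₂, hex₃, fun S₁ S₂ S₃ h₁ h₂ h₃ => ?_⟩
  have hcard : ((S₁ ∪ S₂ ∪ S₃).card : ℝ) ≤ S₁.card + S₂.card + S₃.card := by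
    exact_mod_cast (Finset.card_union_le _ _).trans
      (Nat.add_le_add_right (Finset.card_union_le S₁ S₂) _)
  have hsum : ∑ j ∈ H ∪ Vl ∪ Vr, ystar j =
      ∑ j ∈ H, ystar j + ∑ j ∈ Vl, ystar j + ∑ j ∈ Vr, ystar j := by
    rw [Finset.sum_union (Finset.disjoint_union_left.2 ⟨hd2, hd3⟩), Finset.sum_union hd1]
  have h₁' := hS₁ S₁ h₁
  have h₂' := hS₂ S₂ h₂
  have h₃' := hS₃ S₃ h₃
  push_cast at h₁' h₂' h₃'
  linarith

/-- Lemma 5 of the paper: the LP-based algorithm's solution `S₁ ∪ S₂ ∪ S₃` has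
size at most `5 · OPT`. -/
theorem stmt6 (H Vl Vr : Finset (Set (ℝ × ℝ)))
    (hH : ∀ h ∈ H, IsHorizontalCrossing h)
    (hVl : ∀ v ∈ Vl, IsVerticalLeft v)
    (hVr : ∀ v ∈ Vr, IsVerticalRight v)
    (hd1 : Disjoint H Vl) (hd2 : Disjoint H Vr) (hd3 : Disjoint Vl Vr)
    (OPT : ℕ)
    (hOPT : OPT = sInf {k | ∃ T ⊆ H ∪ Vl ∪ Vr, Hits T H ∧ T.card = k})
    (ystar : Set (ℝ × ℝ) → ℝ)
    (hy01 : ∀ j ∈ H ∪ Vl ∪ Vr, ystar j ∈ Set.Icc (0 : ℝ) 1)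
    (hcover : ∀ i ∈ H,
      1 ≤ ∑ j ∈ (H ∪ Vl ∪ Vr).filter (fun j => (j ∩ i).Nonempty), ystar j)
    (hcost : ∑ j ∈ H ∪ Vl ∪ Vr, ystar j ≤ (OPT : ℝ))
    (Hl Hr Hh : Finset (Set (ℝ × ℝ)))
    (hHl : Hl = H.filter
      (fun i => (2 : ℝ) / 5 ≤ ∑ j ∈ Vl.filter (fun j => (j ∩ i).Nonempty), ystar j))
    (hHr : Hr = H.filter
      (fun i => (2 : ℝ) / 5 ≤ ∑ j ∈ Vr.filter (fun j => (j ∩ i).Nonempty), ystar j))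
    (hHh : Hh = H.filter
      (fun i => (1 : ℝ) / 5 ≤ ∑ j ∈ H.filter (fun j => (j ∩ i).Nonempty), ystar j)) :
    (∃ S₁, IsMinHittingSubset Vl Hl S₁) ∧
    (∃ S₂, IsMinHittingSubset Vr Hr S₂) ∧
    (∃ S₃, IsMinHittingSubset H Hh S₃) ∧
    ∀ S₁ S₂ S₃ : Finset (Set (ℝ × ℝ)),
      IsMinHittingSubset Vl Hl S₁ → IsMinHittingSubset Vr Hr S₂ →
      IsMinHittingSubset H Hh S₃ →
      ((S₁ ∪ S₂ ∪ S₃).card : ℝ) ≤ 5 * (OPT : ℝ) :=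
  stmt6_general H Vl Vr hH hVl hVr hd1 hd2 hd3 OPT ystar hy01 hcost Hl Hr Hh hHl hHr hHh
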